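/- Let Σ be a unimodular fan. For every p > 0, the tropical homology group H_{p,0}(Σ̄, ℤ) of the canonical compactification of Σ vanishes. -/

import Mathlib

open scoped DirectSum NNReal

abbrev NZ (n : ℕ) := Fin n → ℤ
abbrev NR (n : ℕ) := Fin n → ℝ

/-- The canonical map from the lattice `ℤⁿ` into `ℝⁿ`. -/
def latt {n : ℕ} (v : NZ n) : NR n := fun j => (v j : ℝ)

/-- A unimodular (rational, simplicial) fan, encoded combinatorially:
rays are indexed by `R` with primitive generators `e r` in the lattice `ℤⁿ`,
and cones correspond to those finite sets of rays belonging to `faces`. -/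
structure UFan (n : ℕ) where
  R : Type
  fintypeR : Fintype R
  deceqR : DecidableEq R
  e : R → NZ n
  faces : Finset (Finset R)
  empty_mem : ∅ ∈ faces
  down_closed : ∀ S ∈ faces, ∀ T ⊆ S, T ∈ faces
  /-- the primitive generators of the rays of every cone extend to a
  `ℤ`-basis of the lattice -/
  unimodular : ∀ S ∈ faces, ∃ b : Module.Basis (Fin n) ℤ (NZ n), ∃ f : {r // r ∈ S} → Fin n,
      Function.Injective f ∧ ∀ r : {r // r ∈ S}, b (f r) = e r
  /-- the geometric cones of the family intersect along common faces -/
  isFan : ∀ S ∈ faces, ∀ T ∈ faces,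
      (Submodule.span ℝ≥0 (latt '' (e '' (S : Set R))) ⊓
        Submodule.span ℝ≥0 (latt '' (e '' (T : Set R))))
        = Submodule.span ℝ≥0 (latt '' (e '' ((S ∩ T : Finset R) : Set R)))

attribute [instance] UFan.fintypeR UFan.deceqR

namespace UFan

variable {n : ℕ} (Φ : UFan n)

/-- The sublattice `N_σ` generated by the rays of a cone `σ`. -/
def Nsub (S : Finset Φ.R) : Submodule ℤ (NZ n) :=
  Submodule.span ℤ (Φ.e '' (S : Set Φ.R))

/-- The quotient lattice `N^τ = N / N_τ`. -/
abbrev Q (T : Finset Φ.R) := NZ n ⧸ Φ.Nsub T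

/-- The projection `N → N^τ`. -/
def qmap (T : Finset Φ.R) : NZ n →ₗ[ℤ] Φ.Q T := (Φ.Nsub T).mkQ

lemma Nsub_mono {T T' : Finset Φ.R} (h : T ⊆ T') : Φ.Nsub T ≤ Φ.Nsub T' :=
  Submodule.span_mono (Set.image_mono (Finset.coe_subset.2 h))

/-- The projection `N^τ → N^τ'` for `τ ⊆ τ'`. -/
def proj {T T' : Finset Φ.R} (h : T ⊆ T') : Φ.Q T →ₗ[ℤ] Φ.Q T' :=
  Submodule.mapQ _ _ LinearMap.id
    (by simpa using Φ.Nsub_mono h)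

/-- The map on exterior algebras induced by the projection `N^τ → N^τ'`. -/
def emap {T T' : Finset Φ.R} (h : T ⊆ T') :
    ExteriorAlgebra ℤ (Φ.Q T) →ₗ[ℤ] ExteriorAlgebra ℤ (Φ.Q T') :=
  (ExteriorAlgebra.map (Φ.proj h)).toLinearMap

/-- The multi-tangent space `F_p(□_σ^τ)`: the sum over cones `η ⊇ σ` of the
images of `⋀^p N_η` inside the exterior algebra of `N^τ`. -/
def Fmod (p : ℕ) (T S : Finset Φ.R) : Submodule ℤ (ExteriorAlgebra ℤ (Φ.Q T)) :=
  ⨆ (S' : Finset Φ.R) (_ : S' ∈ Φ.faces) (_ : S ⊆ S'),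
    Submodule.map (ExteriorAlgebra.map ((Φ.qmap T).comp (Φ.Nsub S').subtype)).toLinearMap
      (⋀[ℤ]^p ↥(Φ.Nsub S'))

/-- Faces `□_σ^τ` of dimension `q` of the canonical compactification, encoded as
pairs `(τ, σ)` of cones with `τ ⊆ σ` and `dim σ - dim τ = q`. -/
def FaceIdx (q : ℕ) :=
  {TS : Finset Φ.R × Finset Φ.R //
    TS.1 ⊆ TS.2 ∧ TS.2 ∈ Φ.faces ∧ TS.2.card = TS.1.card + q}

instance (q : ℕ) : Fintype (Φ.FaceIdx q) := by
  unfold FaceIdx; infer_instance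

instance (q : ℕ) : DecidableEq (Φ.FaceIdx q) := by
  unfold FaceIdx; infer_instance

/-- `γ` is a codimension-one face of `δ` in the canonical compactification. -/
def Adj {q : ℕ} (γ : Φ.FaceIdx q) (δ : Φ.FaceIdx (q + 1)) : Prop :=
  δ.1.1 ⊆ γ.1.1 ∧ γ.1.2 ⊆ δ.1.2

instance {q : ℕ} (γ : Φ.FaceIdx q) (δ : Φ.FaceIdx (q + 1)) : Decidable (Φ.Adj γ δ) := by
  unfold Adj; infer_instance

/-- The cellular chain group `C_{p,q}` of the canonical compactification. -/
abbrev Cch (p q : ℕ) := ⨁ δ : Φ.FaceIdx q, ↥(Φ.Fmod p δ.1.1 δ.1.2)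

end UFan

/-- Auxiliary data for the tropical (co)chain complexes of the canonical
compactification: a system of incidence signs coming from a choice of cellular
orientation, together with the component maps `F_p(δ) → F_p(γ)` (projection
followed by inclusion), characterized inside the ambient exterior algebras. -/
structure TropData {n : ℕ} (Φ : UFan n) where
  ε : ∀ q : ℕ, Φ.FaceIdx q → Φ.FaceIdx (q + 1) → ℤ
  ε_unit : ∀ q γ δ, Φ.Adj γ δ → ε q γ δ = 1 ∨ ε q γ δ = -1
  ε_zero : ∀ q γ δ, ¬ Φ.Adj γ δ → ε q γ δ = 0
  ε_rel : ∀ (q : ℕ) (γ : Φ.FaceIdx q) (δ : Φ.FaceIdx (q + 2)),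
      (∑ μ : Φ.FaceIdx (q + 1), ε q γ μ * ε (q + 1) μ δ) = 0
  imap : ∀ (p : ℕ) {q : ℕ} (γ : Φ.FaceIdx q) (δ : Φ.FaceIdx (q + 1)), Φ.Adj γ δ →
      (↥(Φ.Fmod p δ.1.1 δ.1.2) →ₗ[ℤ] ↥(Φ.Fmod p γ.1.1 γ.1.2))
  imap_spec : ∀ (p : ℕ) {q : ℕ} (γ : Φ.FaceIdx q) (δ : Φ.FaceIdx (q + 1)) (h : Φ.Adj γ δ)
      (x : ↥(Φ.Fmod p δ.1.1 δ.1.2)),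
      (imap p γ δ h x : ExteriorAlgebra ℤ (Φ.Q γ.1.1)) =
        Φ.emap h.1 (x : ExteriorAlgebra ℤ (Φ.Q δ.1.1))

namespace UFan

variable {n : ℕ} (Φ : UFan n)

/-- The cellular boundary map `C_{p,q+1} → C_{p,q}`. -/
noncomputable def bdry (td : TropData Φ) (p q : ℕ) :
    Φ.Cch p (q + 1) →ₗ[ℤ] Φ.Cch p q :=
  DirectSum.toModule ℤ _ _ fun δ =>
    ∑ γ : Φ.FaceIdx q,
      if h : Φ.Adj γ δ then
        td.ε q γ δ •
          ((DirectSum.lof ℤ (Φ.FaceIdx q) (fun γ' => ↥(Φ.Fmod p γ'.1.1 γ'.1.2)) γ).comp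
            (td.imap p γ δ h))
      else 0

/-- The cellular cochain group `C^{p,q}` of the canonical compactification. -/
abbrev Cco (p q : ℕ) := Module.Dual ℤ (Φ.Cch p q)

/-- The cellular coboundary map. -/
noncomputable def coder (td : TropData Φ) (p q : ℕ) : Φ.Cco p q →ₗ[ℤ] Φ.Cco p (q + 1) :=
  (Φ.bdry td p q).dualMap

/-- The coboundary arriving in degree `q`. -/
noncomputable def coderFrom (td : TropData Φ) (p : ℕ) :
    ∀ q : ℕ, Φ.Cco p (q - 1) →ₗ[ℤ] Φ.Cco p q
  | 0 => 0
  | (q + 1) => Φ.coder td p q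

/-- Tropical cohomology `H^{p,q}` of the canonical compactification. -/
noncomputable def Hcoh (td : TropData Φ) (p q : ℕ) :=
  ↥(LinearMap.ker (Φ.coder td p q)) ⧸
    Submodule.comap (LinearMap.ker (Φ.coder td p q)).subtype
      (LinearMap.range (Φ.coderFrom td p q))

noncomputable instance (td : TropData Φ) (p q : ℕ) : AddCommGroup (Φ.Hcoh td p q) := by
  unfold Hcoh; infer_instance

/-- The boundary leaving degree `q`. -/
noncomputable def bdryTo (td : TropData Φ) (p : ℕ) :
    ∀ q : ℕ, Φ.Cch p q →ₗ[ℤ] Φ.Cch p (q - 1)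
  | 0 => 0
  | (q + 1) => Φ.bdry td p q

/-- Tropical homology `H_{p,q}` of the canonical compactification. -/
noncomputable def Hhom (td : TropData Φ) (p q : ℕ) :=
  letI : AddCommGroup ↥(LinearMap.ker (Φ.bdryTo td p q)) :=
    @Submodule.addCommGroup ℤ (Φ.Cch p q) _ _ _ (LinearMap.ker (Φ.bdryTo td p q))
  ↥(LinearMap.ker (Φ.bdryTo td p q)) ⧸
    Submodule.comap (LinearMap.ker (Φ.bdryTo td p q)).subtype
      (LinearMap.range (Φ.bdry td p q))

noncomputable instance (td : TropData Φ) (p q : ℕ) : AddCommGroup (Φ.Hhom td p q) := by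
  unfold Hhom; infer_instance

end UFan

/-
A vertex `∞_τ` of `Σ̄` carries `F_p(∞_τ) = Σ_{η ⊇ τ} ⋀^p N_η`, projected to `⋀^p N^τ`. For `p > 0`
the term `η = τ` vanishes, and each other term factors through `F_p(□_σ^τ)` for a cone
`σ = τ ∪ {r} ⊆ η` covering `τ`. The boundary of the edge `□_σ^τ` joins `∞_τ` to `∞_σ` with
signs `±1`, so modulo boundaries every chain on `∞_τ` is a chain on vertices of larger cones.
Induction on the codimension of `τ` makes every `0`-chain a boundary; as every `0`-chain is a
cycle, `H_{p,0}` vanishes.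
-/

namespace UFan

variable {n : ℕ} {Φ : UFan n}

lemma Fmod_anti (p : ℕ) (T : Finset Φ.R) {S₁ S₂ : Finset Φ.R} (h : S₁ ⊆ S₂) :
    Φ.Fmod p T S₂ ≤ Φ.Fmod p T S₁ :=
  iSup_mono fun _ => iSup_mono fun _ => iSup_le fun h₂ => le_iSup_of_le (h.trans h₂) le_rfl

lemma map_exteriorPower_le_Fmod (p : ℕ) (T : Finset Φ.R) {S S' : Finset Φ.R}
    (hS' : S' ∈ Φ.faces) (h : S ⊆ S') :
    Submodule.map (ExteriorAlgebra.map ((Φ.qmap T).comp (Φ.Nsub S').subtype)).toLinearMap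
      (⋀[ℤ]^p ↥(Φ.Nsub S')) ≤ Φ.Fmod p T S :=
  le_iSup_of_le S' <| le_iSup_of_le hS' <| le_iSup_of_le h le_rfl

lemma map_exteriorPower_self_eq_bot (S : Finset Φ.R) {p : ℕ} (hp : 0 < p) :
    Submodule.map (ExteriorAlgebra.map ((Φ.qmap S).comp (Φ.Nsub S).subtype)).toLinearMap
      (⋀[ℤ]^p ↥(Φ.Nsub S)) = ⊥ := by
  have hzero : (Φ.qmap S).comp (Φ.Nsub S).subtype = 0 := by
    ext x
    exact (Submodule.Quotient.mk_eq_zero _).2 x.2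
  rw [hzero]
  change Submodule.map _ (LinearMap.range (ExteriorAlgebra.ι ℤ) ^ p) = ⊥
  rw [Submodule.map_pow, ExteriorAlgebra.ι_range_map_map, LinearMap.range_zero,
    Submodule.map_bot, ← Submodule.zero_eq_bot, zero_pow hp.ne']

/-- `F_p(∞_τ)` is covered by the `F_p(□_σ^τ)` for the cones `σ` covering `τ`. -/
lemma Fmod_self_le_iSup_Fmod_insert {p : ℕ} (hp : 0 < p) (S : Finset Φ.R) :
    Φ.Fmod p S S ≤ ⨆ (r) (_ : r ∉ S) (_ : insert r S ∈ Φ.faces), Φ.Fmod p S (insert r S) := by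
  refine iSup_le fun S' => iSup_le fun hS' => iSup_le fun hSS' => ?_
  obtain rfl | hlt := hSS'.eq_or_ssubset
  · rw [map_exteriorPower_self_eq_bot S hp]
    exact bot_le
  obtain ⟨r, hrS', hrS⟩ := Finset.exists_of_ssubset hlt
  have hins : insert r S ⊆ S' := Finset.insert_subset hrS' hSS'
  calc _ ≤ Φ.Fmod p S S' := map_exteriorPower_le_Fmod p S hS' le_rfl
    _ ≤ Φ.Fmod p S (insert r S) := Fmod_anti p S hins
    _ ≤ _ := le_iSup_of_le r <| le_iSup₂_of_le (f := fun _ _ => Φ.Fmod p S (insert r S)) hrS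
        (Φ.down_closed S' hS' _ hins) le_rfl

lemma emap_apply_self {S : Finset Φ.R} (h : S ⊆ S) (x : ExteriorAlgebra ℤ (Φ.Q S)) :
    Φ.emap h x = x := by
  have hid : Φ.proj h = LinearMap.id := Submodule.mapQ_id (p := Φ.Nsub S)
  change (ExteriorAlgebra.map (Φ.proj h)).toLinearMap x = x
  rw [hid, ExteriorAlgebra.map_id]
  rfl

/-- The vertex `∞_τ` of the canonical compactification. -/
def vertex (S : Finset Φ.R) (hS : S ∈ Φ.faces) : Φ.FaceIdx 0 :=
  ⟨(S, S), subset_rfl, hS, rfl⟩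

lemma FaceIdx.exists_eq_vertex (γ : Φ.FaceIdx 0) : ∃ S hS, γ = vertex S hS := by
  obtain ⟨⟨S, T⟩, hST, hT, hcard⟩ := γ
  obtain rfl : S = T := Finset.eq_of_subset_of_card_le hST hcard.le
  exact ⟨S, hT, rfl⟩

/-- The edge `□_σ^τ` joining `∞_τ` to `∞_σ`, for the cone `σ = τ ∪ {r}`. -/
def edge (S : Finset Φ.R) {r : Φ.R} (hr : r ∉ S) (h : insert r S ∈ Φ.faces) : Φ.FaceIdx 1 :=
  ⟨(S, insert r S), Finset.subset_insert r S, h, Finset.card_insert_of_notMem hr⟩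

lemma mem_faces_of_insert {S : Finset Φ.R} {r : Φ.R} (h : insert r S ∈ Φ.faces) : S ∈ Φ.faces :=
  Φ.down_closed _ h S (Finset.subset_insert r S)

section Edge

variable {S : Finset Φ.R} {r : Φ.R}

lemma adj_vertex_edge (hr : r ∉ S) (h : insert r S ∈ Φ.faces) :
    Φ.Adj (vertex S (mem_faces_of_insert h)) (edge S hr h) :=
  ⟨subset_rfl, Finset.subset_insert r S⟩

lemma adj_vertex_insert_edge (hr : r ∉ S) (h : insert r S ∈ Φ.faces) :
    Φ.Adj (vertex (insert r S) h) (edge S hr h) :=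
  ⟨Finset.subset_insert r S, subset_rfl⟩

lemma eq_vertex_of_adj_edge {hr : r ∉ S} {h : insert r S ∈ Φ.faces} {γ : Φ.FaceIdx 0}
    (hγ : Φ.Adj γ (edge S hr h)) :
    γ = vertex S (mem_faces_of_insert h) ∨ γ = vertex (insert r S) h := by
  obtain ⟨T, hT, rfl⟩ := γ.exists_eq_vertex
  obtain ⟨hST, hTS⟩ : S ⊆ T ∧ T ⊆ insert r S := hγ
  by_cases hrT : r ∈ T
  · obtain rfl := hTS.antisymm (Finset.insert_subset hrT hST)
    exact Or.inr rfl
  · obtain rfl := ((Finset.subset_insert_iff_of_notMem hrT).1 hTS).antisymm hST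
    exact Or.inl rfl

lemma vertex_ne_vertex_insert (hr : r ∉ S) (h : insert r S ∈ Φ.faces) :
    vertex S (mem_faces_of_insert h) ≠ vertex (insert r S) h := fun heq => by
  have hS : S = insert r S := congrArg (fun γ : Φ.FaceIdx 0 => γ.1.1) heq
  exact hr (hS ▸ Finset.mem_insert_self r S)

end Edge

abbrev single (p : ℕ) {q : ℕ} (γ : Φ.FaceIdx q) : ↥(Φ.Fmod p γ.1.1 γ.1.2) →ₗ[ℤ] Φ.Cch p q :=
  DirectSum.lof ℤ (Φ.FaceIdx q) (fun γ' => ↥(Φ.Fmod p γ'.1.1 γ'.1.2)) γ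

variable (td : TropData Φ)

lemma bdry_single (p : ℕ) {q : ℕ} (δ : Φ.FaceIdx (q + 1)) (y : ↥(Φ.Fmod p δ.1.1 δ.1.2)) :
    Φ.bdry td p q (single p δ y) =
      ∑ γ, if h : Φ.Adj γ δ then td.ε q γ δ • single p γ (td.imap p γ δ h y) else 0 := by
  rw [bdry, DirectSum.toModule_lof, LinearMap.sum_apply]
  exact Finset.sum_congr rfl fun γ _ => by split_ifs <;> rfl

lemma bdry_single_edge (p : ℕ) {S : Finset Φ.R} {r : Φ.R} (hr : r ∉ S) (h : insert r S ∈ Φ.faces)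
    (y : ↥(Φ.Fmod p S (insert r S))) :
    Φ.bdry td p 0 (single p (edge S hr h) y) =
      td.ε 0 (vertex S (mem_faces_of_insert h)) (edge S hr h) •
          single p _ (td.imap p _ _ (adj_vertex_edge hr h) y) +
        td.ε 0 (vertex (insert r S) h) (edge S hr h) •
          single p _ (td.imap p _ _ (adj_vertex_insert_edge hr h) y) := by
  refine (bdry_single td p (edge S hr h) y).trans ?_
  rw [Fintype.sum_eq_add _ _ (vertex_ne_vertex_insert hr h),
    dif_pos (adj_vertex_edge hr h), dif_pos (adj_vertex_insert_edge hr h)]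
  rintro γ ⟨hγS, hγins⟩
  refine dif_neg fun hadj => ?_
  rcases eq_vertex_of_adj_edge hadj with rfl | rfl
  exacts [hγS rfl, hγins rfl]

lemma single_vertex_mem_range_bdry_of_edge (p : ℕ) {S : Finset Φ.R} {r : Φ.R} (hr : r ∉ S)
    (h : insert r S ∈ Φ.faces) (y : ↥(Φ.Fmod p S (insert r S)))
    (hins : single p _ (td.imap p _ _ (adj_vertex_insert_edge hr h) y) ∈
      LinearMap.range (Φ.bdry td p 0)) :
    single p _ (td.imap p _ _ (adj_vertex_edge hr h) y) ∈ LinearMap.range (Φ.bdry td p 0) := by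
  have hunit : IsUnit (td.ε 0 (vertex S (mem_faces_of_insert h)) (edge S hr h)) :=
    Int.isUnit_iff.2 (td.ε_unit 0 _ _ (adj_vertex_edge hr h))
  have hsmul := eq_sub_of_add_eq (G := Φ.Cch p 0) (bdry_single_edge td p hr h y).symm
  rw [← Submodule.smul_mem_iff_of_isUnit _ hunit, hsmul]
  obtain ⟨z, hz⟩ := hins
  exact ⟨single p (edge S hr h) y - td.ε 0 (vertex (insert r S) h) (edge S hr h) • z,
    by rw [map_sub, map_smul, hz]⟩

lemma single_vertex_mem_range_bdry {p : ℕ} (hp : 0 < p) (S : Finset Φ.R) (hS : S ∈ Φ.faces)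
    (x : ↥(Φ.Fmod p S S)) : single p (vertex S hS) x ∈ LinearMap.range (Φ.bdry td p 0) := by
  induction hk : Fintype.card Φ.R - S.card using Nat.strong_induction_on generalizing S with
  | _ k ih =>
  suffices Φ.Fmod p S S ≤ (Submodule.comap (single p (vertex S hS))
      (LinearMap.range (Φ.bdry td p 0))).map (Φ.Fmod p S S).subtype by
    obtain ⟨x', hx', hxx'⟩ := this x.2
    rwa [Subtype.ext hxx'] at hx'
  refine (Fmod_self_le_iSup_Fmod_insert hp S).trans (iSup_le fun r => iSup₂_le fun hr h => ?_)
  intro w hw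
  have hcard : (insert r S).card ≤ Fintype.card Φ.R := Finset.card_le_univ _
  have hinsert : (insert r S).card = S.card + 1 := Finset.card_insert_of_notMem hr
  refine ⟨td.imap p _ (edge S hr h) (adj_vertex_edge hr h) ⟨w, hw⟩,
    single_vertex_mem_range_bdry_of_edge td p hr h _ (ih _ (by omega) _ h _ rfl), ?_⟩
  exact (td.imap_spec p _ _ _ _).trans (emap_apply_self _ w)

lemma range_bdry_zero_eq_top {p : ℕ} (hp : 0 < p) : LinearMap.range (Φ.bdry td p 0) = ⊤ := by
  refine Submodule.eq_top_iff'.2 fun c => ?_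
  induction c using DirectSum.induction_on with
  | zero => exact zero_mem _
  | of γ x =>
    obtain ⟨S, hS, rfl⟩ := γ.exists_eq_vertex
    exact single_vertex_mem_range_bdry td hp S hS x
  | add _ _ h₁ h₂ => exact add_mem h₁ h₂

end UFan

/-- for a unimodular fan `Φ` and every `p > 0`, the tropical homology
group `H_{p,0}(Φ̄, ℤ)` of the canonical compactification vanishes (for any choice of
cellular orientation data `td`). -/
theorem homology_vanishing_degree_zero {n : ℕ} (Φ : UFan n) (td : TropData Φ)
    (p : ℕ) (hp : 0 < p) : Subsingleton (Φ.Hhom td p 0) := by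
  unfold UFan.Hhom
  -- `Hhom` quotients the cycles with the group structure it names explicitly.
  refine (@Submodule.Quotient.subsingleton_iff ℤ _ _
    (@Submodule.addCommGroup ℤ (Φ.Cch p 0) _ _ _ _) _ _).2 ?_
  rw [Submodule.comap_subtype_eq_top, UFan.range_bdry_zero_eq_top td hp]
  exact le_top
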